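/- arXiv:2106.00718 — 5 statements merged into one kernel-verified Lean document; each statement's English description precedes it below -/
import Mathlib

section
/- Let X : ℕ → ℝ be the utility function of an indivisible public goods game with price p > 0, and suppose X is alternating: X(k+1) < X(k) + p when k is odd and X(k+1) > X(k) + p when k is even. Then a profile s ∈ {0,1}^V is a pure Nash equilibrium if and only if for every player i, s_i + ∑_{(j,i) ∈ E} s_j ≡ 1 (mod 2). -/
open Finset

/-- For an alternating utility function X, a 0/1 profile s is a pure Nash
equilibrium (each s_i = 1 iff X(k+1) − p > X(k), with k the number of
contributing in-neighbors) if and only if s_i + ∑_{(j,i)∈E} s_j ≡ 1 (mod 2)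
for every player i. -/
theorem alternating_equilibrium_iff {V : Type*} [Fintype V] [DecidableEq V]
    (E : V → V → Prop) [DecidableRel E] (hloop : ∀ i, ¬ E i i)
    (X : ℕ → ℝ) (p : ℝ) (hp : 0 < p)
    (halt : ∀ k : ℕ, (Odd k → X (k + 1) < X k + p) ∧ (Even k → X (k + 1) > X k + p))
    (s : V → ℕ) (hs : ∀ i, s i = 0 ∨ s i = 1) :
    (∀ i : V, s i = 1 ↔
        X ((∑ j ∈ univ.filter fun j => E j i, s j) + 1) - p >
          X (∑ j ∈ univ.filter fun j => E j i, s j)) ↔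
      (∀ i : V, (s i + ∑ j ∈ univ.filter fun j => E j i, s j) % 2 = 1) := by
  have key : ∀ k : ℕ, (X (k + 1) - p > X k ↔ Even k) := by
    intro k
    constructor
    · intro h
      by_contra hk
      have hodd : Odd k := Nat.not_even_iff_odd.mp hk
      have := (halt k).1 hodd
      linarith
    · intro h
      have := (halt k).2 h
      linarith
  constructor
  · intro h i
    have hk := (h i).trans (key _)
    rcases hs i with h0 | h1
    · have : ¬ Even (∑ j ∈ univ.filter fun j => E j i, s j) := by
        intro he
        exact absurd (hk.mpr he) (by omega)
      rw [h0]
      simpa [Nat.odd_iff] using Nat.not_even_iff_odd.mp this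
    · have he := hk.mp h1
      rw [h1]
      rw [Nat.even_iff] at he
      omega
  · intro h i
    rw [key]
    have := h i
    rcases hs i with h0 | h1
    · rw [h0] at this
      constructor
      · intro h'; omega
      · intro he; exfalso; rw [Nat.even_iff] at he; omega
    · rw [h1] at this
      rw [Nat.even_iff]
      omega
end

section
/- Let (A, B) be the symmetrized game of a win-lose game (R, C) with R, C ∈ {−1,0}^{n×n}, where A = [[−1 block, R],[C^T, −1 block]] and B = A^T, and suppose every column of R contains at least one 0 entry and every row of C contains at least one 0 entry. If (x, y) with x, y ∈ Δ-parts of a distribution over 2n strategies is a symmetric ε-Nash equilibrium of (A, B) with ε < 1/(2n), then |x| ≥ 1/(4n) and |y| ≥ 1/(4n), where |x| = ∑_i x_i and x (resp. y) denotes the mass on the first (resp. last) n coordinates. -/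
open Matrix

set_option maxHeartbeats 1600000 in
/-- In the symmetrized game of a win-lose game (R, C) with entries in {−1,0},
where every column of R and every row of C has a 0 entry, any symmetric ε-Nash
equilibrium with ε < 1/(2n) puts mass at least 1/(4n) on each half of the
strategies. -/
theorem symmetrized_game_support_mass (n : ℕ) (hn : 0 < n)
    (R C : Matrix (Fin n) (Fin n) ℝ)
    (hR : ∀ i j, R i j = -1 ∨ R i j = 0) (hC : ∀ i j, C i j = -1 ∨ C i j = 0)
    (hRcol : ∀ j, ∃ i, R i j = 0) (hCrow : ∀ i, ∃ j, C i j = 0)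
    (A : Matrix (Fin n ⊕ Fin n) (Fin n ⊕ Fin n) ℝ)
    (hA : A = Matrix.of fun a b =>
      match a, b with
      | Sum.inl _, Sum.inl _ => -1
      | Sum.inl i, Sum.inr j => R i j
      | Sum.inr i, Sum.inl j => C j i
      | Sum.inr _, Sum.inr _ => -1)
    (ε : ℝ) (hε0 : 0 ≤ ε) (hεsmall : ε < 1 / (2 * n))
    (z : Fin n ⊕ Fin n → ℝ) (hz0 : ∀ a, 0 ≤ z a) (hz1 : ∑ a, z a = 1)
    (hNash : ∀ a, 0 < z a → ∀ b, A.mulVec z a ≥ A.mulVec z b - ε) :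
    (∑ i, z (Sum.inl i)) ≥ 1 / (4 * n) ∧ (∑ i, z (Sum.inr i)) ≥ 1 / (4 * n) := by
  set X := ∑ i, z (Sum.inl i) with hX
  set Y := ∑ i, z (Sum.inr i) with hY
  have hXY : X + Y = 1 := by rw [hX, hY, ← Fintype.sum_sum_type]; exact hz1
  have hX0 : (0:ℝ) ≤ X := Finset.sum_nonneg fun i _ => hz0 _
  have hY0 : (0:ℝ) ≤ Y := Finset.sum_nonneg fun i _ => hz0 _
  have hn' : (0:ℝ) < n := by exact_mod_cast hn
  have hn1 : (1:ℝ) ≤ n := by exact_mod_cast hn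
  have hmvl : ∀ i, A.mulVec z (Sum.inl i) = -X + ∑ j, R i j * z (Sum.inr j) := by
    intro i
    rw [hA]
    simp [Matrix.mulVec, dotProduct, Fintype.sum_sum_type, hX]
  have hmvr : ∀ i, A.mulVec z (Sum.inr i) = (∑ j, C j i * z (Sum.inl j)) - Y := by
    intro i
    rw [hA]
    simp [Matrix.mulVec, dotProduct, Fintype.sum_sum_type, hY]
    ring
  -- generic bounds
  have hRsum_le : ∀ i, (∑ j, R i j * z (Sum.inr j)) ≤ 0 := by
    intro i
    apply Finset.sum_nonpos
    intro j _
    rcases hR i j with h | h <;> rw [h] <;> nlinarith [hz0 (Sum.inr j)]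
  have hCsum_le : ∀ i, (∑ j, C j i * z (Sum.inl j)) ≤ 0 := by
    intro i
    apply Finset.sum_nonpos
    intro j _
    rcases hC j i with h | h <;> rw [h] <;> nlinarith [hz0 (Sum.inl j)]
  constructor
  · by_contra hc
    push_neg at hc
    have hYbig : Y ≥ 3/4 := by
      have h4 : 1 / (4 * (n:ℝ)) ≤ 1/4 := by
        rw [div_le_div_iff₀ (by positivity) (by norm_num)]
        nlinarith [hn1]
      linarith
    -- max coordinate of y
    obtain ⟨j0, -, hj0⟩ := Finset.exists_max_image Finset.univ (fun j => z (Sum.inr j))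
      ⟨⟨0, hn⟩, Finset.mem_univ _⟩
    have hj0' : ∀ j : Fin n, z (Sum.inr j) ≤ z (Sum.inr j0) := fun j => hj0 j (Finset.mem_univ _)
    have hymax : Y ≤ n * z (Sum.inr j0) := by
      calc Y = ∑ _j : Fin n, z (Sum.inr _j) := rfl
        _ ≤ ∑ _j : Fin n, z (Sum.inr j0) := Finset.sum_le_sum fun j _ => hj0' j
        _ = n * z (Sum.inr j0) := by simp [mul_comm]
    -- supported strategy in the right half
    have : ∃ i, 0 < z (Sum.inr i) := by
      by_contra h
      push_neg at h
      have : Y = 0 := le_antisymm (Finset.sum_nonpos fun i _ => h i) hY0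
      linarith
    obtain ⟨isup, hisup⟩ := this
    obtain ⟨i1, hi1⟩ := hRcol j0
    have hlow : (∑ j, R i1 j * z (Sum.inr j)) ≥ -(Y - z (Sum.inr j0)) := by
      have hterm : ∀ j : Fin n, R i1 j * z (Sum.inr j) ≥
          -z (Sum.inr j) + (if j = j0 then z (Sum.inr j) else 0) := by
        intro j
        by_cases hj : j = j0
        · subst hj; rw [hi1]; simp
        · simp only [hj, if_false]
          rcases hR i1 j with h | h <;> rw [h] <;> nlinarith [hz0 (Sum.inr j)]
      calc (∑ j, R i1 j * z (Sum.inr j))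
          ≥ ∑ j, (-z (Sum.inr j) + (if j = j0 then z (Sum.inr j) else 0)) :=
            Finset.sum_le_sum fun j _ => hterm j
        _ = -(Y - z (Sum.inr j0)) := by
            rw [Finset.sum_add_distrib, Finset.sum_neg_distrib]
            rw [Finset.sum_ite_eq' Finset.univ j0 (fun j => z (Sum.inr j))]
            simp [hY]
            ring
    have hNash1 := hNash (Sum.inr isup) hisup (Sum.inl i1)
    rw [hmvr isup, hmvl i1] at hNash1
    have h1 : (∑ j, C j isup * z (Sum.inl j)) - Y ≤ -Y := by linarith [hCsum_le isup]
    have h2 : z (Sum.inr j0) ≤ X + ε := by linarith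
    have h3 : z (Sum.inr j0) ≥ 3 / (4 * n) := by
      rw [ge_iff_le, div_le_iff₀ (by positivity)]
      nlinarith [hymax, hYbig]
    have h4 : X + ε < 3 / (4 * n) := by
      have : 1 / (4 * (n:ℝ)) + 1 / (2 * n) = 3 / (4 * n) := by field_simp; ring
      linarith
    linarith
  · by_contra hc
    push_neg at hc
    have hXbig : X ≥ 3/4 := by
      have h4 : 1 / (4 * (n:ℝ)) ≤ 1/4 := by
        rw [div_le_div_iff₀ (by positivity) (by norm_num)]
        nlinarith [hn1]
      linarith
    obtain ⟨i0, -, hi0⟩ := Finset.exists_max_image Finset.univ (fun j => z (Sum.inl j))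
      ⟨⟨0, hn⟩, Finset.mem_univ _⟩
    have hi0' : ∀ j : Fin n, z (Sum.inl j) ≤ z (Sum.inl i0) := fun j => hi0 j (Finset.mem_univ _)
    have hxmax : X ≤ n * z (Sum.inl i0) := by
      calc X = ∑ _j : Fin n, z (Sum.inl _j) := rfl
        _ ≤ ∑ _j : Fin n, z (Sum.inl i0) := Finset.sum_le_sum fun j _ => hi0' j
        _ = n * z (Sum.inl i0) := by simp [mul_comm]
    have : ∃ i, 0 < z (Sum.inl i) := by
      by_contra h
      push_neg at h
      have : X = 0 := le_antisymm (Finset.sum_nonpos fun i _ => h i) hX0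
      linarith
    obtain ⟨isup, hisup⟩ := this
    obtain ⟨j1, hj1⟩ := hCrow i0
    have hlow : (∑ j, C j j1 * z (Sum.inl j)) ≥ -(X - z (Sum.inl i0)) := by
      have hterm : ∀ j : Fin n, C j j1 * z (Sum.inl j) ≥
          -z (Sum.inl j) + (if j = i0 then z (Sum.inl j) else 0) := by
        intro j
        by_cases hj : j = i0
        · subst hj; rw [hj1]; simp
        · simp only [hj, if_false]
          rcases hC j j1 with h | h <;> rw [h] <;> nlinarith [hz0 (Sum.inl j)]
      calc (∑ j, C j j1 * z (Sum.inl j))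
          ≥ ∑ j, (-z (Sum.inl j) + (if j = i0 then z (Sum.inl j) else 0)) :=
            Finset.sum_le_sum fun j _ => hterm j
        _ = -(X - z (Sum.inl i0)) := by
            rw [Finset.sum_add_distrib, Finset.sum_neg_distrib]
            rw [Finset.sum_ite_eq' Finset.univ i0 (fun j => z (Sum.inl j))]
            simp [hX]
            ring
    have hNash1 := hNash (Sum.inl isup) hisup (Sum.inr j1)
    rw [hmvl isup, hmvr j1] at hNash1
    have h1 : -X + (∑ j, R isup j * z (Sum.inr j)) ≤ -X := by linarith [hRsum_le isup]
    have h2 : z (Sum.inl i0) ≤ Y + ε := by linarith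
    have h3 : z (Sum.inl i0) ≥ 3 / (4 * n) := by
      rw [ge_iff_le, div_le_iff₀ (by positivity)]
      nlinarith [hxmax, hXbig]
    have h4 : Y + ε < 3 / (4 * n) := by
      have : 1 / (4 * (n:ℝ)) + 1 / (2 * n) = 3 / (4 * n) := by field_simp; ring
      linarith
    linarith
end

section
/- Let x ∈ [0,1]^n be an ε-approximate equilibrium of a threshold game G(V, E, t) with t = 1/2 and ε < 1/4 (so that ε < t < 1 − ε). Define x̃ by x̃_i = x_i if x_i ≤ 1/2 + ε and x̃_i = 1 otherwise. Then x̃ is again an ε-approximate equilibrium of G(V, E, 1/2). -/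
open Finset

/-- Truncating an ε-approximate equilibrium of a threshold game with t = 1/2
(replacing every coordinate exceeding 1/2 + ε by 1) again yields an
ε-approximate equilibrium, provided ε < 1/4. -/
theorem truncation_preserves_equilibrium {V : Type*} [Fintype V]
    (E : V → V → Prop) [DecidableRel E] (ε : ℝ) (hε0 : 0 ≤ ε) (hε : ε < 1 / 4)
    (x : V → ℝ) (hx : ∀ i, 0 ≤ x i ∧ x i ≤ 1)
    (heq : ∀ i : V,
      ((∑ j ∈ univ.filter fun j => E j i, x j) > 1 / 2 + ε → x i ≤ ε) ∧
      ((∑ j ∈ univ.filter fun j => E j i, x j) < 1 / 2 - ε → x i ≥ 1 - ε)) :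
    (∀ i : V, 0 ≤ (if x i ≤ 1 / 2 + ε then x i else 1) ∧
        (if x i ≤ 1 / 2 + ε then x i else 1) ≤ 1) ∧
    (∀ i : V,
      ((∑ j ∈ univ.filter fun j => E j i, (if x j ≤ 1 / 2 + ε then x j else 1)) >
          1 / 2 + ε → (if x i ≤ 1 / 2 + ε then x i else 1) ≤ ε) ∧
      ((∑ j ∈ univ.filter fun j => E j i, (if x j ≤ 1 / 2 + ε then x j else 1)) <
          1 / 2 - ε → (if x i ≤ 1 / 2 + ε then x i else 1) ≥ 1 - ε)) := by
  have hmono : ∀ j, x j ≤ (if x j ≤ 1 / 2 + ε then x j else 1) := by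
    intro j
    split
    · exact le_refl _
    · exact (hx j).2
  constructor
  · intro i
    constructor
    · split
      · exact (hx i).1
      · norm_num
    · split
      · exact (hx i).2
      · exact le_refl 1
  · intro i
    have hsle : (∑ j ∈ univ.filter fun j => E j i, x j) ≤
        ∑ j ∈ univ.filter fun j => E j i, (if x j ≤ 1 / 2 + ε then x j else 1) :=
      Finset.sum_le_sum fun j _ => hmono j
    constructor
    · intro hgt
      -- show old sum > 1/2 + ε
      have hold : (∑ j ∈ univ.filter fun j => E j i, x j) > 1 / 2 + ε := by
        by_cases hall : ∀ j ∈ univ.filter fun j => E j i, x j ≤ 1 / 2 + ε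
        · have : (∑ j ∈ univ.filter fun j => E j i, x j) =
              ∑ j ∈ univ.filter fun j => E j i, (if x j ≤ 1 / 2 + ε then x j else 1) :=
            Finset.sum_congr rfl fun j hj => (if_pos (hall j hj)).symm
          linarith [this ▸ hgt]
        · push_neg at hall
          obtain ⟨j, hj, hjgt⟩ := hall
          have := Finset.single_le_sum (f := x) (fun k _ => (hx k).1) hj
          linarith
      have hxi : x i ≤ ε := (heq i).1 hold
      have : x i ≤ 1 / 2 + ε := by linarith
      rw [if_pos this]
      exact hxi
    · intro hlt
      have hold : (∑ j ∈ univ.filter fun j => E j i, x j) < 1 / 2 - ε := lt_of_le_of_lt hsle hlt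
      have hxi : x i ≥ 1 - ε := (heq i).2 hold
      split
      · exact hxi
      · linarith
end

section
/- Consider the indivisible public goods game with max composition, value 1, and price p ∈ (0,1), on the graph of the clause gadget: vertices {0,…,7} with edges 0→3, 1→3, 2→3, 3→4, 4→5, 5→6, 6→7, 7→5, where vertices 0, 1, 2 have no in-neighbors among {3,…,7}. If s : {0,…,7} → {0,1} satisfies s(v) = 1 ↔ (no in-neighbor u of v has s(u) = 1) for all v ∈ {3,4,5,6,7}, then s(4) = 1 and s(0) + s(1) + s(2) ≥ 1. -/
/-- Clause gadget: vertices 0…7 with edges 0→3, 1→3, 2→3, 3→4, 4→5, 5→6, 6→7,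
7→5. If s satisfies the max-composition equilibrium condition at every vertex
v ∈ {3,…,7} (s(v) = 1 iff no in-neighbor plays 1), then s(4) = 1 and at least
one of s(0), s(1), s(2) equals 1. -/
theorem clause_gadget (s : Fin 8 → Bool)
    (heq : ∀ v : Fin 8, 3 ≤ v.val →
      (s v = true ↔ ∀ u : Fin 8,
        (u.val, v.val) ∈
            ([(0, 3), (1, 3), (2, 3), (3, 4), (4, 5), (5, 6), (6, 7), (7, 5)] :
              List (ℕ × ℕ)) →
        s u = false)) :
    s 4 = true ∧ (s 0 = true ∨ s 1 = true ∨ s 2 = true) := by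
  have H3 : s 3 = true ↔ (s 0 = false ∧ s 1 = false ∧ s 2 = false) := by
    rw [heq 3 (by decide)]
    constructor
    · intro h; exact ⟨h 0 (by decide), h 1 (by decide), h 2 (by decide)⟩
    · rintro ⟨a, b, c⟩ u hu
      clear heq
      fin_cases u <;> simp_all (config := { decide := true })
  have H4 : s 4 = true ↔ s 3 = false := by
    rw [heq 4 (by decide)]
    constructor
    · intro h; exact h 3 (by decide)
    · intro h u hu; clear heq; fin_cases u <;> simp_all (config := { decide := true })
  have H5 : s 5 = true ↔ (s 4 = false ∧ s 7 = false) := by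
    rw [heq 5 (by decide)]
    constructor
    · intro h; exact ⟨h 4 (by decide), h 7 (by decide)⟩
    · rintro ⟨a, b⟩ u hu; clear heq; fin_cases u <;> simp_all (config := { decide := true })
  have H6 : s 6 = true ↔ s 5 = false := by
    rw [heq 6 (by decide)]
    constructor
    · intro h; exact h 5 (by decide)
    · intro h u hu; clear heq; fin_cases u <;> simp_all (config := { decide := true })
  have H7 : s 7 = true ↔ s 6 = false := by
    rw [heq 7 (by decide)]
    constructor
    · intro h; exact h 6 (by decide)
    · intro h u hu; clear heq; fin_cases u <;> simp_all (config := { decide := true })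
  have h4 : s 4 = true := by
    cases hs4 : s 4 with
    | true => rfl
    | false =>
      cases hs7 : s 7 <;> cases hs6 : s 6 <;> cases hs5 : s 5 <;> simp_all
  refine ⟨h4, ?_⟩
  have h3 : s 3 = false := H4.mp h4
  cases hs0 : s 0 <;> cases hs1 : s 1 <;> cases hs2 : s 2 <;> simp_all
end

section
/- In the variable gadget — a directed path u_1, u_2, …, u_{2k} with edges u_1 → u_2, u_2 → u_1, and u_i → u_{i+1} for 2 ≤ i ≤ 2k−1 — the profiles s : {u_1,…,u_{2k}} → {0,1} satisfying s(v) = 1 ↔ (no in-neighbor of v plays 1) are exactly the two alternating profiles: either s(u_i) = 1 for all odd i and 0 for all even i, or the reverse. -/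
/-- Variable gadget: a directed path on 2k vertices with a bidirectional edge
between the first two. The equilibrium profiles (s(v) = 1 iff no in-neighbor
plays 1) are exactly the two alternating profiles. -/
theorem variable_gadget (k : ℕ) (hk : 1 ≤ k) (s : Fin (2 * k) → Bool) :
    ((s ⟨0, by omega⟩ = true ↔ s ⟨1, by omega⟩ = false) ∧
     (s ⟨1, by omega⟩ = true ↔ s ⟨0, by omega⟩ = false) ∧
     (∀ j : ℕ, 1 ≤ j → ∀ h2 : j + 1 < 2 * k,
        (s ⟨j + 1, h2⟩ = true ↔ s ⟨j, by omega⟩ = false))) ↔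
    ((∀ j : Fin (2 * k), s j = decide (j.val % 2 = 0)) ∨
     (∀ j : Fin (2 * k), s j = decide (j.val % 2 = 1))) := by
  constructor
  · rintro ⟨h01, h10, h⟩
    have hs1 : s ⟨1, by omega⟩ = !(s ⟨0, by omega⟩) := by
      rcases Bool.eq_false_or_eq_true (s ⟨0, by omega⟩) with h0 | h0 <;>
        rcases Bool.eq_false_or_eq_true (s ⟨1, by omega⟩) with h1 | h1 <;>
          simp [h0, h1] at h01 h10 ⊢
    have key : ∀ j, ∀ hj : j < 2 * k,
        s ⟨j, hj⟩ = if j % 2 = 0 then s ⟨0, by omega⟩ else !(s ⟨0, by omega⟩) := by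
      intro j
      induction j with
      | zero => intro hj; simp
      | succ n ih =>
        intro hj
        rcases Nat.eq_zero_or_pos n with rfl | hn
        · rw [show (0+1)%2 = 1 from rfl]
          simpa using hs1
        · have h2 := h n hn hj
          have ihn := ih (by omega)
          rcases Nat.even_or_odd n with he | ho
          · have hmod : n % 2 = 0 := Nat.even_iff.mp he
            have hmod1 : (n + 1) % 2 = 1 := by omega
            rw [hmod1]
            simp only [hmod, if_pos rfl] at ihn
            cases h0 : s ⟨0, by omega⟩ <;> simp_all
          · have hmod : n % 2 = 1 := Nat.odd_iff.mp ho
            have hmod1 : (n + 1) % 2 = 0 := by omega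
            rw [hmod1]
            rw [hmod] at ihn
            cases h0 : s ⟨0, by omega⟩ <;> simp_all
    cases h0 : s ⟨0, by omega⟩
    · right
      intro j
      have := key j.val j.isLt
      rw [h0] at this
      rcases Nat.even_or_odd j.val with he | ho
      · have hmod : j.val % 2 = 0 := Nat.even_iff.mp he
        rw [hmod] at this ⊢
        simpa using this
      · have hmod : j.val % 2 = 1 := Nat.odd_iff.mp ho
        rw [hmod] at this ⊢
        simpa using this
    · left
      intro j
      have := key j.val j.isLt
      rw [h0] at this
      rcases Nat.even_or_odd j.val with he | ho
      · have hmod : j.val % 2 = 0 := Nat.even_iff.mp he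
        rw [hmod] at this ⊢
        simpa using this
      · have hmod : j.val % 2 = 1 := Nat.odd_iff.mp ho
        rw [hmod] at this ⊢
        simpa using this
  · rintro (ha | ha) <;>
    · refine ⟨?_, ?_, ?_⟩
      · rw [ha ⟨0, by omega⟩, ha ⟨1, by omega⟩]; simp
      · rw [ha ⟨1, by omega⟩, ha ⟨0, by omega⟩]; simp
      · intro j hj h2
        rw [ha ⟨j + 1, h2⟩, ha ⟨j, by omega⟩]
        simp only [decide_eq_true_eq, decide_eq_false_iff_not]
        omega
end
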